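/- For every finite symmetric generating set Σ of ℤ² (with Σ = −Σ and 0 ∉ Σ), the metric space (ℤ², d_Σ), where d_Σ is the word metric associated to Σ, has roundness exactly 1. -/

import Mathlib

/-!
Roundness at least `1` holds in every metric space: add four triangle inequalities.
For the upper bound, take a vertex `c` of the convex hull of `Σ`, two functionals `φ, ψ` supporting
`Σ` at `c`, and a generator `e` with `φ e > 0 ≥ ψ e`. Word length is at least any functional divided
by its maximum on `Σ`, so `0, n c, e, n c + e` span a quadrilateral with sides `n, 1, n, 1` and
diagonals at least `n + 1` and `n`. The roundness inequality would give
`(n + 1)^q + n^q ≤ 2 n^q + 2`, which fails for large `n` as soon as `q > 1`.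
-/

/-- The set of exponents `q ≥ 1` for which the roundness inequality holds for all
quadruples of points, with respect to the distance function `d`. -/
noncomputable def roundnessSet {X : Type*} (d : X → X → ℝ) : Set ℝ :=
  {q : ℝ | 1 ≤ q ∧ ∀ x00 x01 x10 x11 : X,
    d x00 x11 ^ q + d x01 x10 ^ q ≤
      d x00 x01 ^ q + d x00 x10 ^ q + d x11 x01 ^ q + d x11 x10 ^ q}

/-- The roundness of a distance function `d` on `X`: the supremum (in `EReal`) of all
exponents `q ≥ 1` for which the roundness inequality holds for all quadruples. -/
noncomputable def roundness {X : Type*} (d : X → X → ℝ) : EReal :=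
  sSup ((fun q : ℝ => (q : EReal)) '' roundnessSet d)
/-- The word length of `g` in an additive group with respect to a generating set `S`:
the least `n` such that `g` is a sum of `n` elements of `S`. -/
noncomputable def addWordLength {G : Type*} [AddGroup G] (S : Set G) (g : G) : ℕ :=
  sInf {n : ℕ | ∃ l : List G, l.length = n ∧ (∀ x ∈ l, x ∈ S) ∧ l.sum = g}

/-- The word metric on an additive group `G` associated to a generating set `S`. -/
noncomputable def addWordDist {G : Type*} [AddGroup G] (S : Set G) (g h : G) : ℝ :=
  addWordLength S (-g + h)

open Filter

section WordLength

variable {G : Type*} [AddGroup G] {S : Set G}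

theorem addWordLength_le_length {g : G} (l : List G) (hl : ∀ x ∈ l, x ∈ S) (hsum : l.sum = g) :
    addWordLength S g ≤ l.length :=
  Nat.sInf_le ⟨l, rfl, hl, hsum⟩

theorem exists_list_mem_sum_eq (hsym : ∀ v ∈ S, -v ∈ S) (hgen : AddSubgroup.closure S = ⊤)
    (g : G) : ∃ l : List G, (∀ x ∈ l, x ∈ S) ∧ l.sum = g := by
  induction (hgen ▸ AddSubgroup.mem_top g : g ∈ AddSubgroup.closure S)
    using AddSubgroup.closure_induction with
  | mem s hs => exact ⟨[s], by simpa using hs, by simp⟩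
  | zero => exact ⟨[], by simp, rfl⟩
  | add a b _ _ iha ihb =>
    obtain ⟨la, hla, rfl⟩ := iha
    obtain ⟨lb, hlb, rfl⟩ := ihb
    exact ⟨la ++ lb, fun x hx => (List.mem_append.mp hx).elim (hla x) (hlb x), List.sum_append⟩
  | neg a _ ih =>
    obtain ⟨l, hl, rfl⟩ := ih
    refine ⟨(l.map (-·)).reverse, ?_, (List.sum_neg_reverse l).symm⟩
    simpa using fun x hx => neg_neg x ▸ hsym _ (hl _ hx)

theorem addWordLength_nsmul_le {c : G} (hc : c ∈ S) (n : ℕ) : addWordLength S (n • c) ≤ n := by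
  simpa using addWordLength_le_length (List.replicate n c)
    (fun x hx => List.eq_of_mem_replicate hx ▸ hc) (List.sum_replicate n c)

theorem addWordLength_of_mem (h0 : (0 : G) ∉ S) {s : G} (hs : s ∈ S) :
    addWordLength S s = 1 := by
  have hle : addWordLength S s ≤ 1 := addWordLength_le_length [s] (by simpa using hs) (by simp)
  refine le_antisymm hle (Nat.one_le_iff_ne_zero.mpr fun h => ?_)
  rcases Nat.sInf_eq_zero.mp h with ⟨l, hlen, -, hsum⟩ | hempty
  · rw [List.length_eq_zero_iff.mp hlen, List.sum_nil] at hsum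
    exact h0 (hsum ▸ hs)
  · exact hempty.subset ⟨[s], rfl, by simpa using hs, by simp⟩

variable (hsym : ∀ v ∈ S, -v ∈ S) (hgen : AddSubgroup.closure S = ⊤)
include hsym hgen

theorem exists_list_length_eq_addWordLength (g : G) :
    ∃ l : List G, l.length = addWordLength S g ∧ (∀ x ∈ l, x ∈ S) ∧ l.sum = g := by
  obtain ⟨l, hl, hsum⟩ := exists_list_mem_sum_eq hsym hgen g
  exact Nat.sInf_mem (s := {n | ∃ l : List G, l.length = n ∧ (∀ x ∈ l, x ∈ S) ∧ l.sum = g})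
    ⟨l.length, l, rfl, hl, hsum⟩

theorem addWordLength_add_le (g h : G) :
    addWordLength S (g + h) ≤ addWordLength S g + addWordLength S h := by
  obtain ⟨lg, hlen_g, hlg, rfl⟩ := exists_list_length_eq_addWordLength hsym hgen g
  obtain ⟨lh, hlen_h, hlh, rfl⟩ := exists_list_length_eq_addWordLength hsym hgen h
  rw [← hlen_g, ← hlen_h, ← List.length_append, ← List.sum_append]
  exact addWordLength_le_length _ (fun x hx => (List.mem_append.mp hx).elim (hlg x) (hlh x)) rfl

theorem addWordLength_neg (g : G) : addWordLength S (-g) = addWordLength S g := by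
  suffices h : ∀ k : G, addWordLength S (-k) ≤ addWordLength S k from
    le_antisymm (h g) (by simpa using h (-g))
  intro k
  obtain ⟨l, hlen, hl, rfl⟩ := exists_list_length_eq_addWordLength hsym hgen k
  rw [← hlen, List.sum_neg_reverse]
  refine (addWordLength_le_length _ ?_ rfl).trans (by simp)
  simpa using fun x hx => neg_neg x ▸ hsym _ (hl _ hx)

theorem map_le_addWordLength_mul (φ : G →+ ℤ) {μ : ℤ} (hμ : ∀ s ∈ S, φ s ≤ μ) (g : G) :
    φ g ≤ addWordLength S g * μ := by
  obtain ⟨l, hlen, hl, rfl⟩ := exists_list_length_eq_addWordLength hsym hgen g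
  rw [← hlen, map_list_sum, ← smul_eq_mul, ← List.length_map (f := φ)]
  exact List.sum_le_card_nsmul _ _ (by simpa using fun x hx => hμ x (hl x hx))

theorem addWordDist_comm (g h : G) : addWordDist S g h = addWordDist S h g := by
  rw [addWordDist, addWordDist, ← addWordLength_neg hsym hgen, neg_add_rev, neg_neg]

theorem addWordDist_triangle (g h k : G) :
    addWordDist S g k ≤ addWordDist S g h + addWordDist S h k := by
  have hsplit : -g + k = (-g + h) + (-h + k) := by simp [add_assoc]
  unfold addWordDist
  exact_mod_cast hsplit ▸ addWordLength_add_le hsym hgen (-g + h) (-h + k)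

end WordLength

section Roundness

variable {X : Type*} {d : X → X → ℝ}

theorem one_mem_roundnessSet (hcomm : ∀ x y, d x y = d y x)
    (htri : ∀ x y z, d x z ≤ d x y + d y z) : (1 : ℝ) ∈ roundnessSet d := by
  refine ⟨le_rfl, fun x00 x01 x10 x11 => ?_⟩
  simp only [Real.rpow_one]
  linarith [htri x00 x01 x11, htri x00 x10 x11, htri x01 x00 x10, htri x01 x11 x10,
    hcomm x01 x00, hcomm x01 x11, hcomm x10 x11]

theorem exists_nat_rpow_add_two_lt {q : ℝ} (hq : 1 < q) :
    ∃ n : ℕ, (n : ℝ) ^ q + 2 < (n + 1 : ℝ) ^ q := by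
  have htend : Tendsto (fun n : ℕ => (n : ℝ) ^ (q - 1)) atTop atTop :=
    (tendsto_rpow_atTop (by linarith)).comp tendsto_natCast_atTop_atTop
  obtain ⟨n, hn2, hn1⟩ := ((htend.eventually_gt_atTop 2).and (eventually_ge_atTop 1)).exists
  have hn : (0 : ℝ) < n := by exact_mod_cast hn1
  refine ⟨n, ?_⟩
  calc (n : ℝ) ^ q + 2 < n ^ (q - 1) * n + n ^ (q - 1) := by
        rw [← Real.rpow_add_one hn.ne', sub_add_cancel]; linarith
    _ = n ^ (q - 1) * (n + 1) := by ring
    _ ≤ (n + 1) ^ (q - 1) * (n + 1) := by gcongr; linarith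
    _ = (n + 1) ^ q := by rw [← Real.rpow_add_one (by positivity), sub_add_cancel]

theorem le_one_of_mem_roundnessSet
    (hquad : ∀ n : ℕ, ∃ x00 x01 x10 x11 : X, d x00 x01 = n ∧ d x00 x10 = 1 ∧ d x11 x01 = 1 ∧
      d x11 x10 = n ∧ n + 1 ≤ d x00 x11 ∧ n ≤ d x01 x10)
    {q : ℝ} (hq : q ∈ roundnessSet d) : q ≤ 1 := by
  by_contra! hq1
  obtain ⟨n, hn⟩ := exists_nat_rpow_add_two_lt hq1
  obtain ⟨x00, x01, x10, x11, h0001, h0010, h1101, h1110, hdiag, hanti⟩ := hquad n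
  have hround := hq.2 x00 x01 x10 x11
  rw [h0001, h0010, h1101, h1110, Real.one_rpow] at hround
  have hdiag_q : (n + 1 : ℝ) ^ q ≤ d x00 x11 ^ q :=
    Real.rpow_le_rpow (by positivity) hdiag (by linarith)
  have hanti_q : (n : ℝ) ^ q ≤ d x01 x10 ^ q :=
    Real.rpow_le_rpow (by positivity) hanti (by linarith)
  linarith

theorem roundness_eq_one_of_isGreatest (h : IsGreatest (roundnessSet d) 1) :
    roundness d = 1 :=
  (EReal.coe_strictMono.monotone.map_isGreatest h).isLUB.sSup_eq

end Roundness

theorem exists_max_and_max_mul_add {α : Type*} {S : Set α} (hfin : S.Finite) (hne : S.Nonempty)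
    (f g : α → ℤ) : ∃ c ∈ S, ∃ N : ℤ,
      (∀ s ∈ S, f s ≤ f c) ∧ ∀ s ∈ S, N * f s + g s ≤ N * f c + g c := by
  obtain ⟨c, hc, hmax⟩ := S.exists_max_image (fun s => toLex (f s, g s)) hfin hne
  obtain ⟨K, hK⟩ := (hfin.image g).bddAbove
  have hlex : ∀ s ∈ S, f s < f c ∨ f s = f c ∧ g s ≤ g c := fun s hs =>
    Prod.Lex.toLex_le_toLex.mp (hmax s hs)
  refine ⟨c, hc, K - g c, fun s hs => ?_, fun s hs => ?_⟩
  · rcases hlex s hs with h | h <;> omega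
  · have hKs : g s ≤ K := hK ⟨s, hs, rfl⟩
    have hKc : g c ≤ K := hK ⟨c, hc, rfl⟩
    rcases hlex s hs with h | ⟨h, hg⟩
    · nlinarith
    · rw [h]; omega

theorem exists_mem_map_pos {G : Type*} [AddGroup G] {S : Set G} (hsym : ∀ v ∈ S, -v ∈ S)
    (hgen : AddSubgroup.closure S = ⊤) {φ : G →+ ℤ} (hφ : φ ≠ 0) : ∃ s ∈ S, 0 < φ s := by
  by_contra! hle
  have hker : S ⊆ φ.ker := fun s hs => by
    have := hle (-s) (hsym s hs)
    rw [map_neg] at this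
    exact le_antisymm (hle s hs) (by linarith)
  exact hφ (AddMonoidHom.ext fun g =>
    (AddSubgroup.closure_le _).mpr hker (hgen ▸ AddSubgroup.mem_top g))

theorem exists_addWordDist_quadrilateral {G : Type*} [AddCommGroup G] {S : Set G}
    (hsym : ∀ v ∈ S, -v ∈ S) (hgen : AddSubgroup.closure S = ⊤) (h0 : (0 : G) ∉ S)
    {c e : G} (hc : c ∈ S) (he : e ∈ S)
    (φ ψ : G →+ ℤ) (hφ : ∀ s ∈ S, φ s ≤ φ c) (hψ : ∀ s ∈ S, ψ s ≤ ψ c)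
    (hφe : 0 < φ e) (hψe : ψ e ≤ 0) (hψc : 0 < ψ c) (n : ℕ) :
    ∃ x00 x01 x10 x11 : G, addWordDist S x00 x01 = n ∧ addWordDist S x00 x10 = 1 ∧
      addWordDist S x11 x01 = 1 ∧ addWordDist S x11 x10 = n ∧
      n + 1 ≤ addWordDist S x00 x11 ∧ n ≤ addWordDist S x01 x10 := by
  have hlen_nc : addWordLength S (n • c) = n := by
    refine le_antisymm (addWordLength_nsmul_le hc n) ?_
    have := map_le_addWordLength_mul hsym hgen ψ hψ (n • c)
    rw [map_nsmul, nsmul_eq_mul] at this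
    exact_mod_cast le_of_mul_le_mul_right this hψc
  have hlen_e := addWordLength_of_mem h0 he
  have hdiag : n + 1 ≤ addWordLength S (n • c + e) := by
    have := map_le_addWordLength_mul hsym hgen φ hφ (n • c + e)
    rw [map_add, map_nsmul, nsmul_eq_mul] at this
    have hlt : (n : ℤ) < addWordLength S (n • c + e) :=
      lt_of_mul_lt_mul_right (by linarith) (hφe.trans_le (hφ e he)).le
    omega
  have hanti : n ≤ addWordLength S (n • c - e) := by
    have := map_le_addWordLength_mul hsym hgen ψ hψ (n • c - e)
    rw [map_sub, map_nsmul, nsmul_eq_mul] at this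
    have hle : (n : ℤ) ≤ addWordLength S (n • c - e) :=
      le_of_mul_le_mul_right (by linarith) hψc
    exact_mod_cast hle
  have h1101 : -(n • c + e) + n • c = -e := by abel
  have h1110 : -(n • c + e) + e = -(n • c) := by abel
  have h0110 : -(n • c) + e = -(n • c - e) := by abel
  refine ⟨0, n • c, e, n • c + e, ?_, ?_, ?_, ?_, ?_, ?_⟩ <;>
    simp only [addWordDist, neg_zero, zero_add, h1101, h1110, h0110,
      addWordLength_neg hsym hgen, hlen_nc, hlen_e, Nat.cast_one]
  · exact_mod_cast hdiag
  · exact_mod_cast hanti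

/-- `ψ` is orthogonal to `e` and `c` maximizes `ψ` on `S` with ties broken by `τ = ⟪e, ·⟫`;
then `φ = N ψ + τ` also supports `S` at `c` for `N` large. -/
theorem exists_two_supporting_functionals {S : Set (ℤ × ℤ)} (hfin : S.Finite)
    (hsym : ∀ v ∈ S, -v ∈ S) (h0 : (0 : ℤ × ℤ) ∉ S) (hgen : AddSubgroup.closure S = ⊤) :
    ∃ c ∈ S, ∃ e ∈ S, ∃ φ ψ : ℤ × ℤ →+ ℤ, (∀ s ∈ S, φ s ≤ φ c) ∧ (∀ s ∈ S, ψ s ≤ ψ c) ∧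
      0 < φ e ∧ ψ e ≤ 0 ∧ 0 < ψ c := by
  obtain ⟨e, he⟩ : S.Nonempty := by
    refine Set.nonempty_iff_ne_empty.mpr fun hS => ?_
    rw [hS, AddSubgroup.closure_empty] at hgen
    exact bot_ne_top hgen
  have he0 : e ≠ 0 := fun h => h0 (h ▸ he)
  let ψ : ℤ × ℤ →+ ℤ := AddMonoidHom.mk' (fun v => e.1 * v.2 - e.2 * v.1) fun _ _ => by
    simp only [Prod.fst_add, Prod.snd_add]; ring
  let τ : ℤ × ℤ →+ ℤ := AddMonoidHom.mk' (fun v => e.1 * v.1 + e.2 * v.2) fun _ _ => by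
    simp only [Prod.fst_add, Prod.snd_add]; ring
  have hψe : ψ e = 0 := by simp only [ψ, AddMonoidHom.mk'_apply]; ring
  have hτe : 0 < τ e := by
    by_contra! hle
    simp only [τ, AddMonoidHom.mk'_apply] at hle
    refine he0 (Prod.ext (mul_self_eq_zero.mp ?_) (mul_self_eq_zero.mp ?_)) <;>
      nlinarith [mul_self_nonneg e.1, mul_self_nonneg e.2]
  have hψ : ψ ≠ 0 := fun h => by
    have h1 := DFunLike.congr_fun h (0, 1)
    have h2 := DFunLike.congr_fun h (1, 0)
    simp only [ψ, AddMonoidHom.mk'_apply, AddMonoidHom.zero_apply, mul_one, mul_zero, sub_zero,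
      zero_sub, neg_eq_zero] at h1 h2
    exact he0 (Prod.ext h1 h2)
  obtain ⟨s, hs, hψs⟩ := exists_mem_map_pos hsym hgen hψ
  obtain ⟨c, hc, N, hψc, hφc⟩ := exists_max_and_max_mul_add hfin ⟨e, he⟩ ψ τ
  refine ⟨c, hc, e, he, N • ψ + τ, ψ, by simpa using hφc, hψc, by simpa [hψe] using hτe,
    hψe.le, hψs.trans_le (hψc s hs)⟩

/-- Every Cayley graph of `ℤ²` has roundness exactly 1: for every finite symmetric
generating set `Σ` with `0 ∉ Σ`, the word metric `d_Σ` on `ℤ²` has roundness `1`. -/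
theorem roundness_z2_eq_one (S : Set (ℤ × ℤ))
    (hfin : S.Finite) (hsym : ∀ v ∈ S, -v ∈ S) (h0 : (0 : ℤ × ℤ) ∉ S)
    (hgen : AddSubgroup.closure S = ⊤) :
    roundness (addWordDist S) = (1 : EReal) := by
  obtain ⟨c, hc, e, he, φ, ψ, hφ, hψ, hφe, hψe, hψc⟩ :=
    exists_two_supporting_functionals hfin hsym h0 hgen
  refine roundness_eq_one_of_isGreatest ⟨one_mem_roundnessSet (addWordDist_comm hsym hgen)
    (addWordDist_triangle hsym hgen), fun q hq => le_one_of_mem_roundnessSet ?_ hq⟩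
  exact exists_addWordDist_quadrilateral hsym hgen h0 hc he φ ψ hφ hψ hφe hψe hψc
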